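/- arXiv:1710.04246 — 9 statements merged into one kernel-verified Lean document; each statement's English description precedes it below -/
import Mathlib

section
/- Every approval-based counting rule satisfies strong support monotonicity with population increase: if W is a winning committee for election E that contains a set G of candidates, then W remains a winning committee after adding a new voter whose ballot is exactly G. -/
open Finset

variable {C : Type*} [Fintype C] [DecidableEq C]

/-- Total score of committee `W` under counting function `f` and approval profile `A`. -/
def countScore {V : Type*} [Fintype V] (f : ℕ → ℕ → ℝ) (A : V → Finset C)
    (W : Finset C) : ℝ :=
  ∑ i, f ((A i ∩ W).card) ((A i).card)

/-- `W` is a winning committee of the counting rule `r_f` for the election `(A, k)`. -/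
def isCountWinner {V : Type*} [Fintype V] (f : ℕ → ℕ → ℝ) (A : V → Finset C) (k : ℕ)
    (W : Finset C) : Prop :=
  W.card = k ∧ ∀ W' : Finset C, W'.card = k → countScore f A W' ≤ countScore f A W

theorem countScore_option_elim {C : Type*} [DecidableEq C] {V : Type*} [Fintype V]
    (f : ℕ → ℕ → ℝ) (A : V → Finset C) (G W : Finset C) :
    countScore f (fun v : Option V => v.elim G A) W =
      f (G ∩ W).card G.card + countScore f A W := by
  simp only [countScore, Fintype.sum_option, Option.elim_none, Option.elim_some]

theorem apply_card_inter_le_of_subset {C : Type*} [DecidableEq C] {f : ℕ → ℕ → ℝ}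
    (hf : ∀ y, Monotone (f · y)) {G W : Finset C} (hGW : G ⊆ W) (W' : Finset C) :
    f (G ∩ W').card G.card ≤ f (G ∩ W).card G.card := by
  rw [inter_eq_left.mpr hGW]
  exact hf _ (card_le_card inter_subset_left)

theorem isCountWinner.option_elim_of_subset {C : Type*} [DecidableEq C] {V : Type*} [Fintype V]
    {f : ℕ → ℕ → ℝ} (hf : ∀ y, Monotone (f · y)) {A : V → Finset C} {k : ℕ} {G W : Finset C}
    (hW : isCountWinner f A k W) (hGW : G ⊆ W) :
    isCountWinner f (fun v : Option V => v.elim G A) k W := by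
  refine ⟨hW.1, fun W' hW' => ?_⟩
  rw [countScore_option_elim, countScore_option_elim]
  exact add_le_add (apply_card_inter_le_of_subset hf hGW W') (hW.2 W' hW')

theorem counting_rule_strong_SMWPI_general {V : Type*} [Fintype V]
    (f : ℕ → ℕ → ℝ) (hf : ∀ x x' y, x' ≤ x → f x' y ≤ f x y)
    (A : V → Finset C) (k : ℕ)
    (G : Finset C)
    (W : Finset C) (hW : isCountWinner f A k W) (hGW : G ⊆ W) :
    isCountWinner f (fun v : Option V => v.elim G A) k W :=
  hW.option_elim_of_subset (fun y _ _ h => hf _ _ y h) hGW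

/-- Every counting rule satisfies strong support monotonicity with population increase:
if `W` is winning for `(A, k)` and `G ⊆ W`, then `W` is still winning after adding a
new voter (the `none` voter) whose ballot is exactly `G`. -/
theorem counting_rule_strong_SMWPI {V : Type*} [Fintype V]
    (f : ℕ → ℕ → ℝ) (hf : ∀ x x' y, x' ≤ x → f x' y ≤ f x y)
    (A : V → Finset C) (k : ℕ) (hk : 1 ≤ k) (hkC : k ≤ Fintype.card C)
    (G : Finset C) (hG : G.Nonempty) (hGk : G.card ≤ k)
    (W : Finset C) (hW : isCountWinner f A k W) (hGW : G ⊆ W) :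
    isCountWinner f (fun v : Option V => v.elim G A) k W :=
  counting_rule_strong_SMWPI_general f hf A k G W hW hGW
end

section
/- If a counting function f satisfies f(x,y) ≥ f(x,y') whenever y ≤ y', and f(x+z, y+z) ≥ f(x,y) for every positive integer z, then the associated counting rule r_f satisfies weak support monotonicity without population increase: if W is winning for E and G ⊆ W is nonempty, and voter i with A_i ∩ G = ∅ adds all candidates of G to her ballot, then some winning committee of the new election intersects G; moreover if every winning committee of E contains G then every winning committee of the new election intersects G. -/
/-!
Adding `G` to the ballot of voter `i` raises her intersection with `W ⊇ G` and her ballot size by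
the same amount `|G| > 0`, so by the third condition the score of `W` does not drop; for a committee
disjoint from `G` only her ballot grows, so by the second condition its score does not rise.
Hence a committee disjoint from `G` that wins after the change was already winning before, and
then `W` wins after the change as well.
-/

open Finset

variable {C : Type*} [Fintype C] [DecidableEq C]

theorem exists_isCountWinner {V : Type*} [Fintype V] (f : ℕ → ℕ → ℝ) (A : V → Finset C) {k : ℕ}
    (hk : k ≤ Fintype.card C) : ∃ W, isCountWinner f A k W := by
  have hne : (univ.powersetCard k : Finset (Finset C)).Nonempty :=
    powersetCard_nonempty.mpr (by simpa using hk)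
  obtain ⟨W, hW, hmax⟩ := exists_max_image _ (countScore f A) hne
  exact ⟨W, mem_powersetCard_univ.mp hW, fun U hU => hmax U (mem_powersetCard_univ.mpr hU)⟩

section

omit [Fintype C]

variable {V : Type*} [Fintype V] {f : ℕ → ℕ → ℝ}

theorem countScore_le_of_forall_ne {A A' : V → Finset C} {X : Finset C} (i : V)
    (hA : ∀ j ≠ i, A j = A' j)
    (hi : f #(A i ∩ X) #(A i) ≤ f #(A' i ∩ X) #(A' i)) :
    countScore f A X ≤ countScore f A' X := by
  refine sum_le_sum fun j _ => ?_
  obtain rfl | hj := eq_or_ne j i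
  · exact hi
  · rw [hA j hj]

theorem isCountWinner_exchange {A A' : V → Finset C} {k : ℕ} {W W' : Finset C}
    (hW : isCountWinner f A k W) (hW' : isCountWinner f A' k W')
    (hlose : countScore f A' W' ≤ countScore f A W')
    (hgain : countScore f A W ≤ countScore f A' W) :
    isCountWinner f A' k W ∧ isCountWinner f A k W' := by
  have hWW' := hW.2 W' hW'.1
  have hW'W := hW'.2 W hW.1
  exact ⟨⟨hW.1, fun U hU => by linarith [hW'.2 U hU]⟩,
    ⟨hW'.1, fun U hU => by linarith [hW.2 U hU]⟩⟩

variable [DecidableEq V] {A : V → Finset C} {i : V} {G : Finset C}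

theorem countScore_update_union_le (hf : ∀ x y y', y ≤ y' → f x y' ≤ f x y)
    (hiG : Disjoint (A i) G) {X : Finset C} (hX : Disjoint X G) :
    countScore f (Function.update A i (A i ∪ G)) X ≤ countScore f A X := by
  refine countScore_le_of_forall_ne i (fun j hj => Function.update_of_ne hj _ _) ?_
  rw [Function.update_self, union_inter_distrib_right, disjoint_iff_inter_eq_empty.mp hX.symm,
    union_empty, card_union_of_disjoint hiG]
  exact hf _ _ _ (Nat.le_add_right _ _)

theorem le_countScore_update_union (hf : ∀ x y z : ℕ, 0 < z → f x y ≤ f (x + z) (y + z))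
    (hiG : Disjoint (A i) G) (hG : G.Nonempty) {W : Finset C} (hGW : G ⊆ W) :
    countScore f A W ≤ countScore f (Function.update A i (A i ∪ G)) W := by
  refine countScore_le_of_forall_ne i (fun j hj => (Function.update_of_ne hj _ _).symm) ?_
  rw [Function.update_self, union_inter_distrib_right, inter_eq_left.mpr hGW,
    card_union_of_disjoint (hiG.mono_left inter_subset_left), card_union_of_disjoint hiG]
  exact hf _ _ _ hG.card_pos

end

theorem counting_rule_weak_SMWOPI_general {V : Type*} [Fintype V] [DecidableEq V]
    (f : ℕ → ℕ → ℝ)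
    (hf2 : ∀ x y y', y ≤ y' → f x y' ≤ f x y)
    (hf3 : ∀ x y z : ℕ, 0 < z → f x y ≤ f (x + z) (y + z))
    (A : V → Finset C) (k : ℕ)
    (G : Finset C) (hG : G.Nonempty)
    (i : V) (hiG : A i ∩ G = ∅)
    (W : Finset C) (hW : isCountWinner f A k W) (hGW : G ⊆ W) :
    (∃ W' : Finset C, isCountWinner f (Function.update A i (A i ∪ G)) k W' ∧
        (W' ∩ G).Nonempty) ∧
    ((∀ W₀ : Finset C, isCountWinner f A k W₀ → G ⊆ W₀) →
      ∀ W' : Finset C, isCountWinner f (Function.update A i (A i ∪ G)) k W' →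
        (W' ∩ G).Nonempty) := by
  have hdisj : Disjoint (A i) G := disjoint_iff_inter_eq_empty.mpr hiG
  have hlose := fun X (hX : Disjoint X G) => countScore_update_union_le hf2 hdisj hX
  have hgain := le_countScore_update_union hf3 hdisj hG hGW
  constructor
  · obtain ⟨Wm, hWm⟩ := exists_isCountWinner f (Function.update A i (A i ∪ G))
      (hW.1 ▸ card_le_univ W)
    by_cases hWmG : Disjoint Wm G
    · exact ⟨W, (isCountWinner_exchange hW hWm (hlose Wm hWmG) hgain).1,
        by rwa [inter_eq_right.mpr hGW]⟩
    · exact ⟨Wm, hWm, not_disjoint_iff_nonempty_inter.mp hWmG⟩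
  · intro hall W' hW'
    by_contra hW'G
    rw [← not_disjoint_iff_nonempty_inter, not_not] at hW'G
    have hWin := (isCountWinner_exchange hW hW' (hlose W' hW'G) hgain).2
    exact hG.ne_empty (disjoint_self.mp (hW'G.mono_left (hall W' hWin)))

/-- Under the stated extra conditions on the counting function `f`, the rule `r_f`
satisfies weak support monotonicity without population increase. -/
theorem counting_rule_weak_SMWOPI {V : Type*} [Fintype V] [DecidableEq V]
    (f : ℕ → ℕ → ℝ) (hf : ∀ x x' y, x' ≤ x → f x' y ≤ f x y)
    (hf2 : ∀ x y y', y ≤ y' → f x y' ≤ f x y)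
    (hf3 : ∀ x y z : ℕ, 0 < z → f x y ≤ f (x + z) (y + z))
    (A : V → Finset C) (k : ℕ) (hk : 1 ≤ k) (hkC : k ≤ Fintype.card C)
    (G : Finset C) (hG : G.Nonempty) (hGk : G.card ≤ k)
    (i : V) (hiG : A i ∩ G = ∅)
    (W : Finset C) (hW : isCountWinner f A k W) (hGW : G ⊆ W) :
    (∃ W' : Finset C, isCountWinner f (Function.update A i (A i ∪ G)) k W' ∧
        (W' ∩ G).Nonempty) ∧
    ((∀ W₀ : Finset C, isCountWinner f A k W₀ → G ⊆ W₀) →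
      ∀ W' : Finset C, isCountWinner f (Function.update A i (A i ∪ G)) k W' →
        (W' ∩ G).Nonempty) :=
  counting_rule_weak_SMWOPI_general f hf2 hf3 A k G hG i hiG W hW hGW
end

section
/- Approval Voting (AV) satisfies strong support monotonicity without population increase: if W is a winning AV committee for E containing a nonempty set G, and a voter i with A_i ∩ G = ∅ changes her ballot to A_i ∪ G, then some winning committee of the new election contains all of G; and if all winning committees of E contain G, then all winning committees of the new election contain G. -/
open Finset

variable {C : Type*} [Fintype C] [DecidableEq C]

/-- The AV score of a committee `W`: the sum over voters of the number of
approved committee members (equivalently, the sum of the approval scores of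
the members of `W`). -/
def avScore {V : Type*} [Fintype V] (A : V → Finset C) (W : Finset C) : ℕ :=
  ∑ i, ((A i ∩ W).card)

/-- `W` is a winning committee of Approval Voting for the election `(A, k)`. -/
def isAVWinner {V : Type*} [Fintype V] (A : V → Finset C) (k : ℕ) (W : Finset C) : Prop :=
  W.card = k ∧ ∀ W' : Finset C, W'.card = k → avScore A W' ≤ avScore A W

lemma card_update_union_inter {α V : Type*} [DecidableEq α] [DecidableEq V]
    {A : V → Finset α} {G : Finset α} {i : V} (hAG : Disjoint (A i) G) (X : Finset α) (j : V) :
    #(Function.update A i (A i ∪ G) j ∩ X) = #(A j ∩ X) + if j = i then #(G ∩ X) else 0 := by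
  rcases eq_or_ne j i with rfl | hji
  · have hdisj : Disjoint (A j ∩ X) (G ∩ X) := hAG.mono inter_subset_left inter_subset_left
    simp [union_inter_distrib_right, card_union_of_disjoint hdisj]
  · simp [hji]

section AddApprovals

variable {α V : Type*} [DecidableEq α] [Fintype V] [DecidableEq V]
  {A : V → Finset α} {G : Finset α} {i : V}

lemma avScore_update_union (hAG : Disjoint (A i) G) (X : Finset α) :
    avScore (Function.update A i (A i ∪ G)) X = avScore A X + #(G ∩ X) := by
  simp only [avScore, card_update_union_inter hAG, sum_add_distrib, sum_ite_eq', mem_univ,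
    if_true]

lemma isAVWinner_update_union {k : ℕ} {W : Finset α} (hAG : Disjoint (A i) G)
    (hW : isAVWinner A k W) (hGW : G ⊆ W) :
    isAVWinner (Function.update A i (A i ∪ G)) k W := by
  refine ⟨hW.1, fun X hX => ?_⟩
  rw [avScore_update_union hAG, avScore_update_union hAG, inter_eq_left.mpr hGW]
  exact Nat.add_le_add (hW.2 X hX) (card_le_card inter_subset_left)

/-- Comparing with a committee `W ⊇ G` that won before the change, a new winner `W'`
gains at most `#(G ∩ W')` while `W` gains `#G`, so `W'` cannot miss any member of `G`. -/
lemma subset_of_isAVWinner_update_union {k : ℕ} {W W' : Finset α} (hAG : Disjoint (A i) G)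
    (hW : isAVWinner A k W) (hGW : G ⊆ W)
    (hW' : isAVWinner (Function.update A i (A i ∪ G)) k W') : G ⊆ W' := by
  have hnew := hW'.2 W hW.1
  rw [avScore_update_union hAG, avScore_update_union hAG, inter_eq_left.mpr hGW] at hnew
  have hold := hW.2 W' hW'.1
  have hcard : #G ≤ #(G ∩ W') := by omega
  exact inter_eq_left.mp (eq_of_subset_of_card_le inter_subset_left hcard)

end AddApprovals

theorem av_strong_SMWOPI_general {V : Type*} [Fintype V] [DecidableEq V]
    (A : V → Finset C) (k : ℕ)
    (G : Finset C)
    (i : V) (hiG : A i ∩ G = ∅)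
    (W : Finset C) (hW : isAVWinner A k W) (hGW : G ⊆ W) :
    (∃ W' : Finset C, isAVWinner (Function.update A i (A i ∪ G)) k W' ∧ G ⊆ W') ∧
    ((∀ W₀ : Finset C, isAVWinner A k W₀ → G ⊆ W₀) →
      ∀ W' : Finset C, isAVWinner (Function.update A i (A i ∪ G)) k W' → G ⊆ W') := by
  have hAG : Disjoint (A i) G := disjoint_iff_inter_eq_empty.mpr hiG
  exact ⟨⟨W, isAVWinner_update_union hAG hW hGW, hGW⟩,
    fun _ _ hW' => subset_of_isAVWinner_update_union hAG hW hGW hW'⟩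

/-- AV satisfies strong support monotonicity without population increase. -/
theorem av_strong_SMWOPI {V : Type*} [Fintype V] [DecidableEq V]
    (A : V → Finset C) (k : ℕ) (hk : 1 ≤ k) (hkC : k ≤ Fintype.card C)
    (G : Finset C) (hG : G.Nonempty) (hGk : G.card ≤ k)
    (i : V) (hiG : A i ∩ G = ∅)
    (W : Finset C) (hW : isAVWinner A k W) (hGW : G ⊆ W) :
    (∃ W' : Finset C, isAVWinner (Function.update A i (A i ∪ G)) k W' ∧ G ⊆ W') ∧
    ((∀ W₀ : Finset C, isAVWinner A k W₀ → G ⊆ W₀) →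
      ∀ W' : Finset C, isAVWinner (Function.update A i (A i ∪ G)) k W' → G ⊆ W') :=
  av_strong_SMWOPI_general A k G i hiG W hW hGW
end

section
/- Satisfaction Approval Voting (SAV) satisfies strong support monotonicity without population increase: if a winning SAV committee contains G and a voter not approving any candidate of G adds all of G to her ballot, then some winning committee of the new election contains G, and the analogous statement holds for all winning committees. -/
/-!
The SAV score of a committee is the sum of the weights of its members, where candidate `x`
has weight `∑ j, [x ∈ A j] / |A j|`. When voter `i` adds `G` to her ballot, the weight of every
candidate of `G` strictly increases and every other weight weakly decreases (her ballot got
longer). If `W ⊇ G` wins before, no outside candidate outweighs a member of `G`; so a new winner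
missing some `c ∈ G` could swap a member `d ∉ W` for `c` and strictly gain, a contradiction.
-/

open Finset

variable {C : Type*} [Fintype C] [DecidableEq C]

/-- The SAV score of a committee `W`: the sum over voters of the fraction of
their approved candidates that are in `W`. -/
noncomputable def savScore {V : Type*} [Fintype V] (A : V → Finset C) (W : Finset C) : ℝ :=
  ∑ i, ((A i ∩ W).card : ℝ) / ((A i).card : ℝ)

/-- `W` is a winning committee of Satisfaction Approval Voting for `(A, k)`. -/
def isSAVWinner {V : Type*} [Fintype V] (A : V → Finset C) (k : ℕ) (W : Finset C) : Prop :=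
  W.card = k ∧ ∀ W' : Finset C, W'.card = k → savScore A W' ≤ savScore A W

section Exchange

variable {C : Type*} [DecidableEq C] {V : Type*} [Fintype V]

noncomputable def voterShare (s : Finset C) (x : C) : ℝ :=
  if x ∈ s then (#s : ℝ)⁻¹ else 0

noncomputable def savWeight (A : V → Finset C) (x : C) : ℝ :=
  ∑ j, voterShare (A j) x

lemma sum_voterShare (s W : Finset C) : ∑ x ∈ W, voterShare s x = (#(s ∩ W) : ℝ) / #s := by
  simp only [voterShare, sum_ite_mem, sum_const, nsmul_eq_mul, inter_comm W s, div_eq_mul_inv]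

lemma savScore_eq_sum_savWeight (A : V → Finset C) (W : Finset C) :
    savScore A W = ∑ x ∈ W, savWeight A x := by
  simp only [savScore, savWeight, ← sum_voterShare]
  exact sum_comm

lemma savScore_insert_erase (A : V → Finset C) {W : Finset C} {c d : C}
    (hc : c ∉ W) (hd : d ∈ W) :
    savScore A (insert c (W.erase d)) = savScore A W - savWeight A d + savWeight A c := by
  rw [savScore_eq_sum_savWeight, savScore_eq_sum_savWeight,
    sum_insert fun h => hc (mem_of_mem_erase h), ← add_sum_erase W _ hd]
  ring

lemma card_insert_erase_of_notMem_of_mem {W : Finset C} {c d : C} (hc : c ∉ W) (hd : d ∈ W) :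
    #(insert c (W.erase d)) = #W := by
  rw [card_insert_of_notMem fun h => hc (mem_of_mem_erase h), card_erase_add_one hd]

lemma isSAVWinner.savWeight_le {A : V → Finset C} {k : ℕ} {W : Finset C} {c d : C}
    (hW : isSAVWinner A k W) (hc : c ∈ W) (hd : d ∉ W) : savWeight A d ≤ savWeight A c := by
  have := hW.2 _ ((card_insert_erase_of_notMem_of_mem hd hc).trans hW.1)
  rw [savScore_insert_erase A hd hc] at this
  linarith

lemma subset_of_isSAVWinner_of_savWeight {V' : Type*} [Fintype V']
    {A : V → Finset C} {A' : V' → Finset C} {k : ℕ} {G W W' : Finset C}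
    (hup : ∀ c ∈ G, savWeight A c < savWeight A' c)
    (hdown : ∀ d ∉ G, savWeight A' d ≤ savWeight A d)
    (hW : isSAVWinner A k W) (hGW : G ⊆ W) (hW' : isSAVWinner A' k W') : G ⊆ W' := by
  by_contra hGW'
  obtain ⟨c, hcG, hcW'⟩ := not_subset.mp hGW'
  obtain ⟨d, hdW', hdW⟩ : ∃ d ∈ W', d ∉ W := by
    refine not_subset.mp fun hW'W => hcW' ?_
    rw [eq_of_subset_of_card_le hW'W (hW.1.trans hW'.1.symm).le]
    exact hGW hcG
  have hdc := hW.savWeight_le (hGW hcG) hdW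
  have hcd := hW'.savWeight_le hdW' hcW'
  linarith [hup c hcG, hdown d fun hdG => hdW (hGW hdG)]

lemma voterShare_lt_of_notMem_of_mem {s t : Finset C} {x : C} (hs : x ∉ s) (ht : x ∈ t) :
    voterShare s x < voterShare t x := by
  simp only [voterShare, if_neg hs, if_pos ht]
  exact inv_pos.mpr (Nat.cast_pos.mpr (card_pos.mpr ⟨x, ht⟩))

lemma voterShare_union_le {s t : Finset C} {x : C} (ht : x ∉ t) :
    voterShare (s ∪ t) x ≤ voterShare s x := by
  by_cases hs : x ∈ s
  · simp only [voterShare, if_pos hs, if_pos (mem_union_left t hs)]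
    exact inv_anti₀ (Nat.cast_pos.mpr (card_pos.mpr ⟨x, hs⟩))
      (Nat.cast_le.mpr (card_le_card subset_union_left))
  · simp [voterShare, hs, ht]

variable [DecidableEq V]

lemma savWeight_update (A : V → Finset C) (i : V) (s : Finset C) (x : C) :
    savWeight (Function.update A i s) x = savWeight A x - voterShare (A i) x + voterShare s x := by
  simp only [savWeight, Function.apply_update (fun _ t => voterShare t x),
    sum_update_of_mem (mem_univ i), ← add_sum_erase univ _ (mem_univ i), sdiff_singleton_eq_erase]
  ring

lemma savWeight_lt_update_union {A : V → Finset C} {i : V} {G : Finset C} {c : C}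
    (hcG : c ∈ G) (hcA : c ∉ A i) :
    savWeight A c < savWeight (Function.update A i (A i ∪ G)) c := by
  rw [savWeight_update]
  linarith [voterShare_lt_of_notMem_of_mem hcA (mem_union_right (A i) hcG)]

lemma savWeight_update_union_le {A : V → Finset C} {i : V} {G : Finset C} {d : C} (hdG : d ∉ G) :
    savWeight (Function.update A i (A i ∪ G)) d ≤ savWeight A d := by
  rw [savWeight_update]
  linarith [voterShare_union_le (s := A i) hdG]

end Exchange

lemma exists_isSAVWinner {V : Type*} [Fintype V] (A : V → Finset C) {k : ℕ}
    (hk : k ≤ Fintype.card C) : ∃ W, isSAVWinner A k W := by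
  obtain ⟨W, hW, hmax⟩ := exists_max_image (powersetCard k univ) (savScore A)
    (powersetCard_nonempty.mpr (by simpa using hk))
  exact ⟨W, (mem_powersetCard.mp hW).2,
    fun W' hW' => hmax W' (mem_powersetCard.mpr ⟨subset_univ W', hW'⟩)⟩

theorem sav_strong_SMWOPI_general {V : Type*} [Fintype V] [DecidableEq V]
    (A : V → Finset C)
    (k : ℕ) (hkC : k ≤ Fintype.card C)
    (G : Finset C)
    (i : V) (hiG : A i ∩ G = ∅)
    (W : Finset C) (hW : isSAVWinner A k W) (hGW : G ⊆ W) :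
    (∃ W' : Finset C, isSAVWinner (Function.update A i (A i ∪ G)) k W' ∧ G ⊆ W') ∧
    ((∀ W₀ : Finset C, isSAVWinner A k W₀ → G ⊆ W₀) →
      ∀ W' : Finset C, isSAVWinner (Function.update A i (A i ∪ G)) k W' → G ⊆ W') := by
  have hdisj : Disjoint (A i) G := disjoint_iff_inter_eq_empty.mpr hiG
  have hwinners : ∀ W', isSAVWinner (Function.update A i (A i ∪ G)) k W' → G ⊆ W' :=
    fun _ hW' => subset_of_isSAVWinner_of_savWeight
      (fun _ hc => savWeight_lt_update_union hc (disjoint_right.mp hdisj hc))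
      (fun _ hd => savWeight_update_union_le hd) hW hGW hW'
  obtain ⟨W', hW'⟩ := exists_isSAVWinner (Function.update A i (A i ∪ G)) hkC
  exact ⟨⟨W', hW', hwinners W' hW'⟩, fun _ => hwinners⟩

/-- SAV satisfies strong support monotonicity without population increase. -/
theorem sav_strong_SMWOPI {V : Type*} [Fintype V] [DecidableEq V]
    (A : V → Finset C) (hA : ∀ i, (A i).Nonempty)
    (k : ℕ) (hk : 1 ≤ k) (hkC : k ≤ Fintype.card C)
    (G : Finset C) (hG : G.Nonempty) (hGk : G.card ≤ k)
    (i : V) (hiG : A i ∩ G = ∅)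
    (W : Finset C) (hW : isSAVWinner A k W) (hGW : G ⊆ W) :
    (∃ W' : Finset C, isSAVWinner (Function.update A i (A i ∪ G)) k W' ∧ G ⊆ W') ∧
    ((∀ W₀ : Finset C, isSAVWinner A k W₀ → G ⊆ W₀) →
      ∀ W' : Finset C, isSAVWinner (Function.update A i (A i ∪ G)) k W' → G ⊆ W') :=
  sav_strong_SMWOPI_general A k hkC G i hiG W hW hGW
end

section
/- Minimax Approval Voting (MAV) satisfies strong support monotonicity with population increase: if W is a winning MAV committee for E containing a nonempty set G with |G| ≤ k, then W (or another committee containing G) is winning for the election obtained by adding a voter whose ballot is exactly G; formally, if G ⊆ W for some winning W of E then G ⊆ W' for some winning W' of E_{ΔG}, and if G ⊆ W for all winning W of E then G ⊆ W' for all winning W' of E_{ΔG}. -/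
/-!
Adding a voter with ballot `G` changes the MAV cost of a committee `X` to
`max (ham X G) (cost X)`, and among committees of size `k` the distance `ham X G` is
minimal, equal to `k - |G|`, exactly when `G ⊆ X`. A winner `W ⊇ G` therefore minimises
both terms and stays a winner. A new winner `W'` has new cost at most `max (k - |G|) (cost W)`:
if this maximum is `k - |G|`, then `ham W' G ≤ k - |G|` forces `G ⊆ W'`; otherwise
`cost W' ≤ cost W`, so `W'` already won the old election.
-/

open Finset

variable {C : Type*} [Fintype C] [DecidableEq C]

/-- The Hamming distance between two finite sets. -/
def ham (A B : Finset C) : ℕ := (A \ B).card + (B \ A).card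

/-- The MAV cost of `W`: the maximum Hamming distance between `W` and a ballot. -/
def mavCost {V : Type*} [Fintype V] (A : V → Finset C) (W : Finset C) : ℕ :=
  univ.sup fun i : V => ham W (A i)

/-- `W` is a winning committee of Minimax Approval Voting for `(A, k)`. -/
def isMAVWinner {V : Type*} [Fintype V] (A : V → Finset C) (k : ℕ) (W : Finset C) : Prop :=
  W.card = k ∧ ∀ W' : Finset C, W'.card = k → mavCost A W ≤ mavCost A W'

section Hamming

variable {α : Type*} [DecidableEq α]

lemma ham_eq_card_sub_card_of_subset {X G : Finset α} (h : G ⊆ X) :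
    ham X G = X.card - G.card := by
  rw [ham, sdiff_eq_empty_iff_subset.mpr h, card_empty, card_sdiff_of_subset h, add_zero]

lemma card_sub_card_le_ham (X G : Finset α) : X.card - G.card ≤ ham X G :=
  (le_card_sdiff G X).trans (Nat.le_add_right _ _)

lemma subset_of_ham_le_card_sub_card {X G : Finset α} (h : ham X G ≤ X.card - G.card) :
    G ⊆ X := by
  by_contra hGX
  have hmissing : 0 < (G \ X).card := card_pos.mpr (sdiff_nonempty.mpr hGX)
  have := le_card_sdiff G X
  rw [ham] at h
  omega

end Hamming

section AddVoter

variable {α : Type*} [DecidableEq α] {V : Type*} [Fintype V] (A : V → Finset α) (G : Finset α)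

lemma mavCost_option_elim (X : Finset α) :
    mavCost (fun v : Option V => v.elim G A) X = max (ham X G) (mavCost A X) := by
  simp [mavCost, univ_option, insertNone, sup_map, Function.comp_def]

variable {A G} {k : ℕ} {W : Finset α}

lemma isMAVWinner_option_elim_of_subset (hW : isMAVWinner A k W) (hGW : G ⊆ W) :
    isMAVWinner (fun v : Option V => v.elim G A) k W := by
  refine ⟨hW.1, fun X hX => ?_⟩
  have hham : ham W G ≤ ham X G := by
    rw [ham_eq_card_sub_card_of_subset hGW, hW.1, ← hX]
    exact card_sub_card_le_ham X G
  rw [mavCost_option_elim, mavCost_option_elim]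
  exact max_le_max hham (hW.2 X hX)

lemma subset_or_isMAVWinner_of_isMAVWinner_option_elim (hW : isMAVWinner A k W)
    (hGW : G ⊆ W) {W' : Finset α} (hW' : isMAVWinner (fun v : Option V => v.elim G A) k W') :
    G ⊆ W' ∨ isMAVWinner A k W' := by
  have hcost := hW'.2 W hW.1
  rw [mavCost_option_elim, mavCost_option_elim, ham_eq_card_sub_card_of_subset hGW, hW.1,
    max_le_iff] at hcost
  rcases le_total (mavCost A W) (k - G.card) with hsmall | hbig
  · left
    rw [max_eq_left hsmall, ← hW'.1] at hcost
    exact subset_of_ham_le_card_sub_card hcost.1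
  · right
    rw [max_eq_right hbig] at hcost
    exact ⟨hW'.1, fun X hX => hcost.2.trans (hW.2 X hX)⟩

end AddVoter

theorem mav_strong_SMWPI_general {V : Type*} [Fintype V]
    (A : V → Finset C) (k : ℕ)
    (G : Finset C)
    (W : Finset C) (hW : isMAVWinner A k W) (hGW : G ⊆ W) :
    (∃ W' : Finset C, isMAVWinner (fun v : Option V => v.elim G A) k W' ∧ G ⊆ W') ∧
    ((∀ W₀ : Finset C, isMAVWinner A k W₀ → G ⊆ W₀) →
      ∀ W' : Finset C, isMAVWinner (fun v : Option V => v.elim G A) k W' → G ⊆ W') :=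
  ⟨⟨W, isMAVWinner_option_elim_of_subset hW hGW, hGW⟩, fun hall _ hW' =>
    (subset_or_isMAVWinner_of_isMAVWinner_option_elim hW hGW hW').elim id (hall _)⟩

/-- MAV satisfies strong support monotonicity with population increase:
adding one new voter (the `none` voter) whose ballot is exactly `G ⊆ W`. -/
theorem mav_strong_SMWPI {V : Type*} [Fintype V]
    (A : V → Finset C) (k : ℕ) (hk : 1 ≤ k) (hkC : k ≤ Fintype.card C)
    (G : Finset C) (hG : G.Nonempty) (hGk : G.card ≤ k)
    (W : Finset C) (hW : isMAVWinner A k W) (hGW : G ⊆ W) :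
    (∃ W' : Finset C, isMAVWinner (fun v : Option V => v.elim G A) k W' ∧ G ⊆ W') ∧
    ((∀ W₀ : Finset C, isMAVWinner A k W₀ → G ⊆ W₀) →
      ∀ W' : Finset C, isMAVWinner (fun v : Option V => v.elim G A) k W' → G ⊆ W') :=
  mav_strong_SMWPI_general A k G W hW hGW
end

section
/- MAV satisfies weak support monotonicity without population increase: if W is a winning MAV committee containing nonempty G and voter i with A_i ∩ G = ∅ changes her ballot to A_i ∪ G, then some winning committee of the new election intersects G; if all winning committees of E contain G then all winning committees of the new election intersect G. -/
/-!
Adding `G` to the ballot of voter `i` does not raise the MAV cost of a committee containing `G`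
and does not lower the cost of a committee disjoint from `G`. So if a committee `W'` disjoint from
`G` wins the new election, comparing it with the old winner `W ⊇ G` through the old and new costs
shows that `W` wins the new election and `W'` wins the old one.
-/

open Finset

variable {C : Type*} [Fintype C] [DecidableEq C]

section Lemmas

omit [Fintype C]

theorem ham_union_le_of_subset {W A G : Finset C} (hGW : G ⊆ W) :
    ham W (A ∪ G) ≤ ham W A := by
  unfold ham
  rw [union_sdiff_distrib, sdiff_eq_empty_iff_subset.2 hGW, union_empty]
  gcongr
  exact subset_union_left

theorem ham_le_ham_union_of_disjoint {W A G : Finset C} (hWG : Disjoint W G) :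
    ham W A ≤ ham W (A ∪ G) := by
  unfold ham
  rw [sdiff_union_distrib, sdiff_eq_self_of_disjoint hWG, inter_eq_left.2 sdiff_subset]
  gcongr
  exact subset_union_left

section Update

variable {V : Type*} [Fintype V] [DecidableEq V] {A : V → Finset C} {i : V} {B W : Finset C}

theorem mavCost_update_le (h : ham W B ≤ ham W (A i)) :
    mavCost (Function.update A i B) W ≤ mavCost A W := by
  refine sup_mono_fun fun j _ => ?_
  rcases eq_or_ne j i with rfl | hj
  · simpa using h
  · simp [Function.update_of_ne hj]

theorem le_mavCost_update (h : ham W (A i) ≤ ham W B) :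
    mavCost A W ≤ mavCost (Function.update A i B) W := by
  refine sup_mono_fun fun j _ => ?_
  rcases eq_or_ne j i with rfl | hj
  · simpa using h
  · simp [Function.update_of_ne hj]

end Update

section Winner

variable {V : Type*} [Fintype V] {A A' : V → Finset C} {k : ℕ} {W W' : Finset C}

theorem exists_isMAVWinner [Fintype C] (A : V → Finset C) (hk : k ≤ Fintype.card C) :
    ∃ W, isMAVWinner A k W := by
  have hne : ((univ : Finset C).powersetCard k).Nonempty := by
    rwa [powersetCard_nonempty, card_univ]
  obtain ⟨W, hW, hmin⟩ := exists_min_image _ (mavCost A) hne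
  exact ⟨W, (mem_powersetCard.1 hW).2,
    fun X hX => hmin X (mem_powersetCard.2 ⟨subset_univ X, hX⟩)⟩

theorem isMAVWinner.of_mavCost_le (hW : isMAVWinner A k W) (hW' : isMAVWinner A' k W')
    (hAW : mavCost A' W ≤ mavCost A W) (hAW' : mavCost A W' ≤ mavCost A' W') :
    isMAVWinner A' k W :=
  ⟨hW.1, fun X hX => calc
    mavCost A' W ≤ mavCost A W := hAW
    _ ≤ mavCost A W' := hW.2 W' hW'.1
    _ ≤ mavCost A' W' := hAW'
    _ ≤ mavCost A' X := hW'.2 X hX⟩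

end Winner

end Lemmas

theorem mav_weak_SMWOPI_general {V : Type*} [Fintype V] [DecidableEq V]
    (A : V → Finset C) (k : ℕ)
    (G : Finset C) (hG : G.Nonempty)
    (i : V)
    (W : Finset C) (hW : isMAVWinner A k W) (hGW : G ⊆ W) :
    (∃ W' : Finset C, isMAVWinner (Function.update A i (A i ∪ G)) k W' ∧
        (W' ∩ G).Nonempty) ∧
    ((∀ W₀ : Finset C, isMAVWinner A k W₀ → G ⊆ W₀) →
      ∀ W' : Finset C, isMAVWinner (Function.update A i (A i ∪ G)) k W' →
        (W' ∩ G).Nonempty) := by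
  set A' := Function.update A i (A i ∪ G)
  have hcost_W : mavCost A' W ≤ mavCost A W := mavCost_update_le (ham_union_le_of_subset hGW)
  have hcost_disjoint : ∀ Z, Disjoint Z G → mavCost A Z ≤ mavCost A' Z :=
    fun Z hZ => le_mavCost_update (ham_le_ham_union_of_disjoint hZ)
  have hWG : (W ∩ G).Nonempty := by rwa [inter_eq_right.2 hGW]
  constructor
  · obtain ⟨W'', hW''⟩ := exists_isMAVWinner A' (hW.1 ▸ card_le_univ W)
    by_cases hW''G : Disjoint W'' G
    · exact ⟨W, hW.of_mavCost_le hW'' hcost_W (hcost_disjoint W'' hW''G), hWG⟩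
    · exact ⟨W'', hW'', not_disjoint_iff_nonempty_inter.1 hW''G⟩
  · intro hall W' hW'
    by_contra hW'G
    rw [← not_disjoint_iff_nonempty_inter, not_not] at hW'G
    have hW'_wins : isMAVWinner A k W' :=
      hW'.of_mavCost_le hW (hcost_disjoint W' hW'G) hcost_W
    exact hG.ne_empty (disjoint_self.1 (hW'G.mono_left (hall W' hW'_wins)))

/-- MAV satisfies weak support monotonicity without population increase. -/
theorem mav_weak_SMWOPI {V : Type*} [Fintype V] [DecidableEq V]
    (A : V → Finset C) (k : ℕ) (hk : 1 ≤ k) (hkC : k ≤ Fintype.card C)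
    (G : Finset C) (hG : G.Nonempty) (hGk : G.card ≤ k)
    (i : V) (hiG : A i ∩ G = ∅)
    (W : Finset C) (hW : isMAVWinner A k W) (hGW : G ⊆ W) :
    (∃ W' : Finset C, isMAVWinner (Function.update A i (A i ∪ G)) k W' ∧
        (W' ∩ G).Nonempty) ∧
    ((∀ W₀ : Finset C, isMAVWinner A k W₀ → G ⊆ W₀) →
      ∀ W' : Finset C, isMAVWinner (Function.update A i (A i ∪ G)) k W' →
        (W' ∩ G).Nonempty) :=
  mav_weak_SMWOPI_general A k G hG i W hW hGW
end

section
/- The Monroe rule satisfies weak support monotonicity without population increase: if a winning Monroe committee W contains nonempty G and a voter i with A_i ∩ G = ∅ changes her ballot to A_i ∪ G, then some winning Monroe committee of the new election intersects G; if all winning committees of E contain G, then all winning committees of the new election intersect G. -/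
/-!
Enlarging ballots can only lower the misrepresentation of any committee, and it leaves the
misrepresentation of a committee disjoint from `G` unchanged. So if some winner `W'` of the
new election avoided `G`, then `W'` would have been a winner of the old election and `W`
would still be a winner of the new one.
-/

open Finset

variable {C : Type*} [Fintype C] [DecidableEq C]

/-- `π` is a valid Monroe assignment of the voters to the committee `W`:
every voter is assigned a member of `W`, and every committee member represents
between `⌊n/k⌋` and `⌈n/k⌉` voters. -/
def isMonroeAssignment {V : Type*} [Fintype V] (k : ℕ) (W : Finset C) (π : V → C) : Prop :=
  (∀ i, π i ∈ W) ∧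
  ∀ c ∈ W, Fintype.card V / k ≤ (univ.filter fun i => π i = c).card ∧
    (univ.filter fun i => π i = c).card ≤ (Fintype.card V + k - 1) / k

/-- The Monroe misrepresentation of `W`: the minimum, over valid assignments,
of the number of voters assigned a candidate they do not approve of. -/
noncomputable def monroeMisrep {V : Type*} [Fintype V] (A : V → Finset C) (k : ℕ) (W : Finset C) : ℕ :=
  sInf {m : ℕ | ∃ π : V → C, isMonroeAssignment k W π ∧
    m = (univ.filter fun i => π i ∉ A i).card}

/-- `W` is a winning committee of the Monroe rule for `(A, k)`. -/
def isMonroeWinner {V : Type*} [Fintype V] (A : V → Finset C) (k : ℕ) (W : Finset C) : Prop :=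
  W.card = k ∧ ∀ W' : Finset C, W'.card = k → monroeMisrep A k W ≤ monroeMisrep A k W'

section Misrep

variable {α V : Type*} [DecidableEq α] [Fintype V] {A B : V → Finset α} {k : ℕ} {W : Finset α}

theorem monroeMisrep_antitone (hAB : ∀ j, A j ⊆ B j) :
    monroeMisrep B k W ≤ monroeMisrep A k W := by
  by_cases hπ : ∃ π : V → α, isMonroeAssignment k W π
  · obtain ⟨π, hπ, hmin⟩ := Nat.sInf_mem (s := {m : ℕ | ∃ π : V → α,
      isMonroeAssignment k W π ∧ m = (univ.filter fun j => π j ∉ A j).card})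
      (hπ.elim fun π hπ => ⟨_, π, hπ, rfl⟩)
    calc monroeMisrep B k W ≤ (univ.filter fun j => π j ∉ B j).card := Nat.sInf_le ⟨π, hπ, rfl⟩
      _ ≤ (univ.filter fun j => π j ∉ A j).card :=
        card_le_card (monotone_filter_right _ fun j _ h hA => h (hAB j hA))
      _ = monroeMisrep A k W := hmin.symm
  · have hempty : ∀ A : V → Finset α, {m : ℕ | ∃ π : V → α, isMonroeAssignment k W π ∧
        m = (univ.filter fun j => π j ∉ A j).card} = ∅ :=
      fun A => Set.eq_empty_of_forall_notMem fun _ ⟨π, hπ', _⟩ => hπ ⟨π, hπ'⟩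
    simp only [monroeMisrep, hempty, le_refl]

theorem monroeMisrep_congr (hAB : ∀ j, ∀ c ∈ W, c ∈ A j ↔ c ∈ B j) :
    monroeMisrep A k W = monroeMisrep B k W := by
  unfold monroeMisrep
  congr 1
  ext m
  refine exists_congr fun π => and_congr_right fun hπ => ?_
  rw [filter_congr fun j _ => not_congr (hAB j (π j) (hπ.1 j))]

theorem exists_isMonroeWinner [Fintype α] (A : V → Finset α) (hkC : k ≤ Fintype.card α) :
    ∃ W : Finset α, isMonroeWinner A k W := by
  obtain ⟨t, -, ht⟩ := exists_subset_card_eq (s := (univ : Finset α)) (n := k) (by simpa using hkC)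
  obtain ⟨W, hWk, hWmin⟩ := exists_min_image ((univ : Finset (Finset α)).filter (·.card = k))
    (monroeMisrep A k) ⟨t, by simp [ht]⟩
  simp only [mem_filter, mem_univ, true_and] at hWk hWmin
  exact ⟨W, hWk, hWmin⟩

theorem isMonroeWinner_of_monroeMisrep_eq {W' : Finset α} (hAB : ∀ j, A j ⊆ B j)
    (hW : isMonroeWinner A k W) (hW' : isMonroeWinner B k W')
    (heq : monroeMisrep B k W' = monroeMisrep A k W') :
    isMonroeWinner A k W' ∧ isMonroeWinner B k W := by
  have hWW' : monroeMisrep A k W' ≤ monroeMisrep A k W :=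
    calc monroeMisrep A k W' = monroeMisrep B k W' := heq.symm
      _ ≤ monroeMisrep B k W := hW'.2 W hW.1
      _ ≤ monroeMisrep A k W := monroeMisrep_antitone hAB
  refine ⟨⟨hW'.1, fun U hU => hWW'.trans (hW.2 U hU)⟩, ⟨hW.1, fun U hU => ?_⟩⟩
  calc monroeMisrep B k W ≤ monroeMisrep A k W := monroeMisrep_antitone hAB
    _ ≤ monroeMisrep A k W' := hW.2 W' hW'.1
    _ = monroeMisrep B k W' := heq.symm
    _ ≤ monroeMisrep B k U := hW'.2 U hU

end Misrep

theorem monroe_weak_SMWOPI_general {V : Type*} [Fintype V] [DecidableEq V]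
    (A : V → Finset C) (k : ℕ)
    (G : Finset C) (hG : G.Nonempty)
    (i : V)
    (W : Finset C) (hW : isMonroeWinner A k W) (hGW : G ⊆ W) :
    (∃ W' : Finset C, isMonroeWinner (Function.update A i (A i ∪ G)) k W' ∧
        (W' ∩ G).Nonempty) ∧
    ((∀ W₀ : Finset C, isMonroeWinner A k W₀ → G ⊆ W₀) →
      ∀ W' : Finset C, isMonroeWinner (Function.update A i (A i ∪ G)) k W' →
        (W' ∩ G).Nonempty) := by
  set A' := Function.update A i (A i ∪ G)
  have hAA' : ∀ j, A j ⊆ A' j := fun j => by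
    by_cases hj : j = i
    · subst hj; simp [A']
    · simp [A', hj]
  have hdisj : ∀ W', isMonroeWinner A' k W' → Disjoint W' G →
      isMonroeWinner A k W' ∧ isMonroeWinner A' k W := fun W' hW' hW'G =>
    isMonroeWinner_of_monroeMisrep_eq hAA' hW hW' <| monroeMisrep_congr fun j c hc => by
      by_cases hj : j = i
      · subst hj; simp [A', disjoint_left.mp hW'G hc]
      · simp [A', hj]
  have hWG : (W ∩ G).Nonempty := by rwa [inter_eq_right.mpr hGW]
  refine ⟨?_, fun hall W' hW' => ?_⟩
  · obtain ⟨Wx, hWx⟩ := exists_isMonroeWinner A' (hW.1 ▸ card_le_univ W)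
    by_cases hWxG : Disjoint Wx G
    · exact ⟨W, (hdisj Wx hWx hWxG).2, hWG⟩
    · exact ⟨Wx, hWx, not_disjoint_iff_nonempty_inter.mp hWxG⟩
  · refine not_disjoint_iff_nonempty_inter.mp fun hW'G => ?_
    have hGW' := hall W' (hdisj W' hW' hW'G).1
    exact hG.ne_empty (hW'G.eq_bot_of_ge hGW')

/-- The Monroe rule satisfies weak support monotonicity without population increase. -/
theorem monroe_weak_SMWOPI {V : Type*} [Fintype V] [DecidableEq V]
    (A : V → Finset C) (k : ℕ) (hk : 1 ≤ k) (hkC : k ≤ Fintype.card C)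
    (G : Finset C) (hG : G.Nonempty) (hGk : G.card ≤ k)
    (i : V) (hiG : A i ∩ G = ∅)
    (W : Finset C) (hW : isMonroeWinner A k W) (hGW : G ⊆ W) :
    (∃ W' : Finset C, isMonroeWinner (Function.update A i (A i ∪ G)) k W' ∧
        (W' ∩ G).Nonempty) ∧
    ((∀ W₀ : Finset C, isMonroeWinner A k W₀ → G ⊆ W₀) →
      ∀ W' : Finset C, isMonroeWinner (Function.update A i (A i ∪ G)) k W' →
        (W' ∩ G).Nonempty) :=
  monroe_weak_SMWOPI_general A k G hG i W hW hGW
end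

section
/- SeqPAV satisfies weak support monotonicity with population increase: let E_{ΔG} be the election obtained from election E by adding a voter approving exactly the nonempty set G; if G ⊆ W for some SeqPAV winning committee W of E, then some SeqPAV winning committee of E_{ΔG} intersects G, and if G ⊆ W for every SeqPAV winning committee W of E, then every SeqPAV winning committee of E_{ΔG} intersects G. -/
open Finset

variable {C : Type*} [Fintype C] [DecidableEq C]

/-- The SeqPAV score of candidate `c` given the partial committee `S`. -/
def seqPAVScore {V : Type*} [Fintype V] (A : V → Finset C) (S : Finset C) (c : C) : ℚ :=
  ∑ i ∈ univ.filter fun i => c ∈ A i, (1 : ℚ) / (1 + (A i ∩ S).card)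

/-- The set of committees that SeqPAV can output after `k` iterations
(ties give several possible outputs): at each iteration a candidate of maximal
SeqPAV score among the non-elected candidates is added. -/
def seqPAVOutputs {V : Type*} [Fintype V] (A : V → Finset C) : ℕ → Set (Finset C)
  | 0 => {∅}
  | k + 1 => {W | ∃ S ∈ seqPAVOutputs A k, ∃ c ∉ S,
      (∀ c' ∉ S, seqPAVScore A S c' ≤ seqPAVScore A S c) ∧ W = insert c S}

lemma seqPAV_card_of_mem {V : Type*} [Fintype V] (A : V → Finset C) :
    ∀ j, ∀ W ∈ seqPAVOutputs A j, W.card = j := by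
  intro j
  induction j with
  | zero =>
    intro W hW
    simp only [seqPAVOutputs, Set.mem_singleton_iff] at hW
    simp [hW]
  | succ n ih =>
    intro W hW
    obtain ⟨S, hS, c, hc, -, rfl⟩ := hW
    rw [card_insert_of_notMem hc, ih S hS]

lemma seqPAV_extend {V : Type*} [Fintype V] (A : V → Finset C) (j k : ℕ)
    (hjk : j ≤ k) (hkC : k ≤ Fintype.card C) :
    ∀ S ∈ seqPAVOutputs A j, ∃ W ∈ seqPAVOutputs A k, S ⊆ W := by
  induction k, hjk using Nat.le_induction with
  | base => exact fun S hS => ⟨S, hS, subset_rfl⟩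
  | succ n hn ih =>
    intro S hS
    obtain ⟨T, hT, hST⟩ := ih (le_trans (Nat.le_succ n) hkC) S hS
    have hTn : T.card = n := seqPAV_card_of_mem A n T hT
    have hlt : T.card < Fintype.card C := by
      rw [hTn]; omega
    have hne : (univ \ T).Nonempty := by
      rw [sdiff_nonempty]
      intro h
      have := card_le_card h
      simp only [card_univ] at this
      omega
    obtain ⟨c, hcmem, hcmax⟩ := exists_max_image (univ \ T) (seqPAVScore A T) hne
    refine ⟨insert c T, ⟨T, hT, c, (mem_sdiff.mp hcmem).2, ?_, rfl⟩,
      hST.trans (subset_insert c T)⟩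
    intro c' hc'
    exact hcmax c' (mem_sdiff.mpr ⟨mem_univ c', hc'⟩)

lemma seqPAVScore_option {V : Type*} [Fintype V] (A : V → Finset C) (G : Finset C)
    (S : Finset C) (c : C) :
    seqPAVScore (fun v : Option V => v.elim G A) S c =
      seqPAVScore A S c + (if c ∈ G then (1 : ℚ) / (1 + (G ∩ S).card) else 0) := by
  unfold seqPAVScore
  rw [sum_filter, sum_filter, Fintype.sum_option]
  simp only [Option.elim]
  rw [add_comm]
  rfl

lemma score_le_score_option {V : Type*} [Fintype V] (A : V → Finset C) (G : Finset C)
    (S : Finset C) (c : C) :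
    seqPAVScore A S c ≤ seqPAVScore (fun v : Option V => v.elim G A) S c := by
  rw [seqPAVScore_option]
  have : (0 : ℚ) ≤ (if c ∈ G then (1 : ℚ) / (1 + (G ∩ S).card) else 0) := by
    split
    · positivity
    · exact le_refl 0
  linarith

lemma score_option_eq_of_not_mem {V : Type*} [Fintype V] (A : V → Finset C) (G : Finset C)
    (S : Finset C) (c : C) (hc : c ∉ G) :
    seqPAVScore (fun v : Option V => v.elim G A) S c = seqPAVScore A S c := by
  rw [seqPAVScore_option, if_neg hc, add_zero]

lemma score_option_eq_add_one {V : Type*} [Fintype V] (A : V → Finset C) (G : Finset C)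
    (S : Finset C) (c : C) (hc : c ∈ G) (hGS : G ∩ S = ∅) :
    seqPAVScore (fun v : Option V => v.elim G A) S c = seqPAVScore A S c + 1 := by
  rw [seqPAVScore_option, if_pos hc, hGS]
  norm_num

lemma score_option_le_add_one {V : Type*} [Fintype V] (A : V → Finset C) (G : Finset C)
    (S : Finset C) (c : C) :
    seqPAVScore (fun v : Option V => v.elim G A) S c ≤ seqPAVScore A S c + 1 := by
  rw [seqPAVScore_option]
  have : (if c ∈ G then (1 : ℚ) / (1 + (G ∩ S).card) else 0) ≤ 1 := by
    split
    · rw [div_le_one (by positivity)]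
      have : (0 : ℚ) ≤ (G ∩ S).card := by positivity
      linarith
    · norm_num
  linarith

/-- Backward lemma: a run of SeqPAV on the augmented election which avoids `G`
is a valid run on the original election. -/
lemma seqPAV_back {V : Type*} [Fintype V] (A : V → Finset C) (G : Finset C) :
    ∀ j, ∀ S ∈ seqPAVOutputs (fun v : Option V => v.elim G A) j, S ∩ G = ∅ →
      S ∈ seqPAVOutputs A j := by
  intro j
  induction j with
  | zero => intro S hS _; exact hS
  | succ n ih =>
    intro S hS hSG
    obtain ⟨T, hT, c, hc, hmax, rfl⟩ := hS
    have hcG : c ∉ G := by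
      intro h
      have : c ∈ insert c T ∩ G := mem_inter.mpr ⟨mem_insert_self c T, h⟩
      rw [hSG] at this
      exact notMem_empty c this
    have hTG : T ∩ G = ∅ := by
      apply subset_empty.mp
      rw [← hSG]
      exact inter_subset_inter (subset_insert c T) subset_rfl
    refine ⟨T, ih T hT hTG, c, hc, ?_, rfl⟩
    intro c' hc'
    calc seqPAVScore A T c' ≤ seqPAVScore (fun v : Option V => v.elim G A) T c' :=
          score_le_score_option A G T c'
      _ ≤ seqPAVScore (fun v : Option V => v.elim G A) T c := hmax c' hc'
      _ = seqPAVScore A T c := score_option_eq_of_not_mem A G T c hcG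

/-- Forward mimicking lemma: a run of SeqPAV on the original election which avoids `G`
is either a valid run on the augmented election, or at some point (not later) the
augmented election can reach a committee intersecting `G`. -/
lemma seqPAV_mimic {V : Type*} [Fintype V] (A : V → Finset C) (G : Finset C) :
    ∀ j, ∀ S ∈ seqPAVOutputs A j, S ∩ G = ∅ →
      S ∈ seqPAVOutputs (fun v : Option V => v.elim G A) j ∨
      ∃ j' ≤ j, ∃ T ∈ seqPAVOutputs (fun v : Option V => v.elim G A) j',
        (T ∩ G).Nonempty := by
  intro j
  induction j with
  | zero => intro S hS _; exact Or.inl hS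
  | succ n ih =>
    intro S hS hSG
    obtain ⟨T, hT, c, hc, hmax, rfl⟩ := hS
    have hcG : c ∉ G := by
      intro h
      have : c ∈ insert c T ∩ G := mem_inter.mpr ⟨mem_insert_self c T, h⟩
      rw [hSG] at this
      exact notMem_empty c this
    have hTG : T ∩ G = ∅ := by
      apply subset_empty.mp
      rw [← hSG]
      exact inter_subset_inter (subset_insert c T) subset_rfl
    have hGT : G ∩ T = ∅ := by rw [inter_comm]; exact hTG
    rcases ih T hT hTG with hT' | ⟨j', hj', T', hT', hT'G⟩
    · by_cases hcase : ∀ c' ∉ T, seqPAVScore (fun v : Option V => v.elim G A) T c' ≤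
          seqPAVScore (fun v : Option V => v.elim G A) T c
      · exact Or.inl ⟨T, hT', c, hc, hcase, rfl⟩
      · push_neg at hcase
        obtain ⟨g, hgT, hg⟩ := hcase
        -- pick a maximizer of the augmented score over univ \ T; it must be in G
        have hne : (univ \ T).Nonempty := ⟨c, mem_sdiff.mpr ⟨mem_univ c, hc⟩⟩
        obtain ⟨c₀, hc₀mem, hc₀max⟩ :=
          exists_max_image (univ \ T) (seqPAVScore (fun v : Option V => v.elim G A) T) hne
        have hc₀T : c₀ ∉ T := (mem_sdiff.mp hc₀mem).2
        have hgc₀ : seqPAVScore (fun v : Option V => v.elim G A) T g ≤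
            seqPAVScore (fun v : Option V => v.elim G A) T c₀ :=
          hc₀max g (mem_sdiff.mpr ⟨mem_univ g, hgT⟩)
        have hc₀G : c₀ ∈ G := by
          by_contra hcon
          have h1 : seqPAVScore (fun v : Option V => v.elim G A) T c₀ =
              seqPAVScore A T c₀ := score_option_eq_of_not_mem A G T c₀ hcon
          have h2 : seqPAVScore A T c₀ ≤ seqPAVScore A T c := hmax c₀ hc₀T
          have h3 : seqPAVScore A T c =
              seqPAVScore (fun v : Option V => v.elim G A) T c :=
            (score_option_eq_of_not_mem A G T c hcG).symm
          linarith
        refine Or.inr ⟨n + 1, le_refl _, insert c₀ T, ⟨T, hT', c₀, hc₀T, ?_, rfl⟩,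
          ⟨c₀, mem_inter.mpr ⟨mem_insert_self c₀ T, hc₀G⟩⟩⟩
        intro c' hc'
        exact hc₀max c' (mem_sdiff.mpr ⟨mem_univ c', hc'⟩)
    · exact Or.inr ⟨j', le_trans hj' (Nat.le_succ n), T', hT', hT'G⟩

/-- If the original election can reach a committee intersecting `G`, so can the
augmented election (not later). -/
lemma seqPAV_reach {V : Type*} [Fintype V] (A : V → Finset C) (G : Finset C) :
    ∀ j, ∀ W ∈ seqPAVOutputs A j, (W ∩ G).Nonempty →
      ∃ j' ≤ j, ∃ T ∈ seqPAVOutputs (fun v : Option V => v.elim G A) j',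
        (T ∩ G).Nonempty := by
  intro j
  induction j with
  | zero =>
    intro W hW hWG
    simp only [seqPAVOutputs, Set.mem_singleton_iff] at hW
    subst hW
    simp at hWG
  | succ n ih =>
    intro W hW hWG
    obtain ⟨S, hS, c, hc, hmax, rfl⟩ := hW
    by_cases hSG : (S ∩ G).Nonempty
    · obtain ⟨j', hj', T, hT, hTG⟩ := ih S hS hSG
      exact ⟨j', le_trans hj' (Nat.le_succ n), T, hT, hTG⟩
    · rw [not_nonempty_iff_eq_empty] at hSG
      have hGS : G ∩ S = ∅ := by rw [inter_comm]; exact hSG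
      have hcG : c ∈ G := by
        obtain ⟨x, hx⟩ := hWG
        rw [mem_inter, mem_insert] at hx
        rcases hx.1 with rfl | hxS
        · exact hx.2
        · exact absurd (mem_inter.mpr ⟨hxS, hx.2⟩) (by rw [hSG]; exact notMem_empty x)
      rcases seqPAV_mimic A G n S hS hSG with hS' | ⟨j', hj', T, hT, hTG⟩
      · refine ⟨n + 1, le_refl _, insert c S, ⟨S, hS', c, hc, ?_, rfl⟩,
          ⟨c, mem_inter.mpr ⟨mem_insert_self c S, hcG⟩⟩⟩
        intro c' hc'
        calc seqPAVScore (fun v : Option V => v.elim G A) S c'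
            ≤ seqPAVScore A S c' + 1 := score_option_le_add_one A G S c'
          _ ≤ seqPAVScore A S c + 1 := by linarith [hmax c' hc']
          _ = seqPAVScore (fun v : Option V => v.elim G A) S c :=
              (score_option_eq_add_one A G S c hcG hGS).symm
      · exact ⟨j', le_trans hj' (Nat.le_succ n), T, hT, hTG⟩

/-- SeqPAV satisfies weak support monotonicity with population increase:
adding a new voter (the `none` voter) whose ballot is exactly `G`. -/
theorem seqpav_weak_SMWPI {V : Type*} [Fintype V]
    (A : V → Finset C) (k : ℕ) (hk : 1 ≤ k) (hkC : k ≤ Fintype.card C)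
    (G : Finset C) (hG : G.Nonempty) (hGk : G.card ≤ k)
    (W : Finset C) (hW : W ∈ seqPAVOutputs A k) (hGW : G ⊆ W) :
    (∃ W' ∈ seqPAVOutputs (fun v : Option V => v.elim G A) k, (W' ∩ G).Nonempty) ∧
    ((∀ W₀ ∈ seqPAVOutputs A k, G ⊆ W₀) →
      ∀ W' ∈ seqPAVOutputs (fun v : Option V => v.elim G A) k, (W' ∩ G).Nonempty) := by
  constructor
  · have hWG : (W ∩ G).Nonempty := by
      obtain ⟨g, hg⟩ := hG
      exact ⟨g, mem_inter.mpr ⟨hGW hg, hg⟩⟩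
    obtain ⟨j', hj', T, hT, hTG⟩ := seqPAV_reach A G k W hW hWG
    obtain ⟨W', hW', hTW'⟩ :=
      seqPAV_extend (fun v : Option V => v.elim G A) j' k hj' hkC T hT
    exact ⟨W', hW', hTG.mono (inter_subset_inter hTW' subset_rfl)⟩
  · intro hall W' hW'
    by_contra hcon
    rw [not_nonempty_iff_eq_empty] at hcon
    have hWE : W' ∈ seqPAVOutputs A k := seqPAV_back A G k W' hW' hcon
    obtain ⟨g, hg⟩ := hG
    have : g ∈ W' ∩ G := mem_inter.mpr ⟨hall W' hWE hg, hg⟩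
    rw [hcon] at this
    exact notMem_empty g this
end

section
/- No approval-based multi-winner voting rule can satisfy both perfect representation (PR) and strong support monotonicity with population increase (strong SMWPI). Concretely: in the election with k = 3, C = {c_1,...,c_5}, and 12 voters (2×{c_1,c_4}, 2×{c_1,c_5}, 3×{c_2,c_4}, 1×{c_2,c_5}, 2×{c_3,c_5}, 2×{c_3}), {c_1,c_2,c_3} is the unique committee providing PR; after adding 3 voters each approving {c_1,c_3}, the unique committee providing PR is {c_3,c_4,c_5}, which does not contain {c_1,c_3}. -/
open Finset

/-- `W` provides perfect representation for the election `(A, k)`: the voters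
can be partitioned into `k` groups of size `n/k` (the fibers of `g`), matched
bijectively with the members of `W`, so that every voter approves her group's
candidate. -/
def providesPR {C : Type*} [DecidableEq C] {V : Type*} [Fintype V]
    (A : V → Finset C) (k : ℕ) (W : Finset C) : Prop :=
  W.card = k ∧ ∃ g : V → C, (∀ i, g i ∈ W ∧ g i ∈ A i) ∧
    ∀ c ∈ W, (univ.filter fun i => g i = c).card = Fintype.card V / k

/-- Candidates `c_1,…,c_5` are `0,…,4`.  The 12-voter profile:
2×{c_1,c_4}, 2×{c_1,c_5}, 3×{c_2,c_4}, 1×{c_2,c_5}, 2×{c_3,c_5}, 2×{c_3}. -/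
def A₁₆ : Fin 12 → Finset (Fin 5) := fun i =>
  if i.val < 2 then {0, 3} else if i.val < 4 then {0, 4}
  else if i.val < 7 then {1, 3} else if i.val < 8 then {1, 4}
  else if i.val < 10 then {2, 4} else {2}

/-- The profile after 3 new voters enter, each approving `{c_1, c_3}`. -/
def A₁₆' : Fin 15 → Finset (Fin 5) := fun i =>
  if h : i.val < 12 then A₁₆ ⟨i.val, h⟩ else {0, 2}

/-! A PR assignment `g` sends every voter whose ballot meets `W` only inside `S ⊆ W` to a
member of `S`, and each member receives exactly `n / k` voters; so at most `n / k * #S` voters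
have their ballot meet `W` inside `S`. This Hall-type condition is decidable, and a finite
check shows that in each of the two elections exactly one committee of size 3 satisfies it
(in the first, `{c_3,c_4,c_5}` fails because five voters meet it only in `c_4`).
That committee does provide PR, as an explicit assignment shows. -/

abbrev HallCondition {C V : Type*} [DecidableEq C] [Fintype V]
    (A : V → Finset C) (k : ℕ) (W : Finset C) : Prop :=
  #W = k ∧ ∀ S ∈ W.powerset, #{i | A i ∩ W ⊆ S} ≤ Fintype.card V / k * #S

section HallCondition

variable {C V : Type*} [DecidableEq C] [Fintype V] {A : V → Finset C} {k : ℕ} {W : Finset C}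

theorem providesPR.card_filter_inter_subset_le (hW : providesPR A k W) {S : Finset C}
    (hS : S ⊆ W) : #{i | A i ∩ W ⊆ S} ≤ Fintype.card V / k * #S := by
  obtain ⟨-, g, hg, hfiber⟩ := hW
  refine card_le_mul_card_image_of_maps_to (f := g) (fun i hi => ?_) _ fun c hc => ?_
  · exact (mem_filter.mp hi).2 (mem_inter.mpr ⟨(hg i).2, (hg i).1⟩)
  · rw [← hfiber c (hS hc)]
    exact card_le_card (filter_subset_filter _ (filter_subset _ _))

theorem providesPR.hallCondition (hW : providesPR A k W) : HallCondition A k W :=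
  ⟨hW.1, fun _ hS => hW.card_filter_inter_subset_le (mem_powerset.mp hS)⟩

theorem providesPR_iff_eq_of_hallCondition (hW : providesPR A k W)
    (huniq : ∀ W', HallCondition A k W' → W' = W) (W' : Finset C) :
    providesPR A k W' ↔ W' = W :=
  ⟨fun h => huniq W' h.hallCondition, fun h => h ▸ hW⟩

end HallCondition

theorem eq_of_hallCondition_A₁₆ :
    ∀ W : Finset (Fin 5), HallCondition A₁₆ 3 W → W = {0, 1, 2} := by
  decide +kernel

theorem eq_of_hallCondition_A₁₆' :
    ∀ W : Finset (Fin 5), HallCondition A₁₆' 3 W → W = {2, 3, 4} := by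
  decide +kernel

theorem providesPR_A₁₆ : providesPR A₁₆ 3 {0, 1, 2} :=
  ⟨rfl, fun i => if i.val < 4 then 0 else if i.val < 8 then 1 else 2, by decide, by decide⟩

theorem providesPR_A₁₆' : providesPR A₁₆' 3 {2, 3, 4} :=
  ⟨rfl, fun i => if i.val < 2 then 3 else if i.val < 4 then 4
      else if i.val < 7 then 3 else if i.val < 10 then 4 else 2, by decide, by decide⟩

/-- No rule can satisfy perfect representation and strong SMWPI: in the original
election the unique PR committee of size 3 is `{c_1,c_2,c_3}`, so a PR rule
outputs exactly it; after 3 voters approving `G = {c_1,c_3} ⊆ {c_1,c_2,c_3}`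
enter, the unique PR committee is `{c_3,c_4,c_5}`, which does not contain `G`. -/
theorem pr_incompatible_strong_SMWPI :
    (∀ W : Finset (Fin 5), providesPR A₁₆ 3 W ↔ W = {0, 1, 2}) ∧
    (∀ W : Finset (Fin 5), providesPR A₁₆' 3 W ↔ W = {2, 3, 4}) ∧
    ¬ ({0, 2} : Finset (Fin 5)) ⊆ {2, 3, 4} := by
  exact ⟨providesPR_iff_eq_of_hallCondition providesPR_A₁₆ eq_of_hallCondition_A₁₆,
    providesPR_iff_eq_of_hallCondition providesPR_A₁₆' eq_of_hallCondition_A₁₆', by decide⟩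
end
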